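/- arXiv:2505.00460 — 2 statements merged into one kernel-verified Lean document; each statement's English description precedes it below -/
import Mathlib

section
/- Let X ∈ ℝ^{n×p} and Y ∈ ℝ^{n×q} have orthonormal columns. If D₂(X,Y) := sqrt(max(p,q) − ‖XᵀY‖_F²) = 0, then p = q and XXᵀ = YYᵀ, i.e., the column spaces of X and Y coincide. -/
open Matrix

/-- A matrix has orthonormal columns. -/
def hasOrthonormalCols {n p : ℕ} (X : Matrix (Fin n) (Fin p) ℝ) : Prop := Xᵀ * X = 1

/-- Squared Frobenius norm: ‖A‖_F² = tr(AᵀA). -/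
noncomputable def frobSq {a b : ℕ} (A : Matrix (Fin a) (Fin b) ℝ) : ℝ := (Aᵀ * A).trace

/-- Frobenius norm. -/
noncomputable def frob {a b : ℕ} (A : Matrix (Fin a) (Fin b) ℝ) : ℝ := Real.sqrt (frobSq A)

lemma hermMMt {a b : ℕ} (M : Matrix (Fin a) (Fin b) ℝ) : (M * Mᵀ).IsHermitian := by
  simpa [Matrix.conjTranspose_eq_transpose_of_trivial] using
    Matrix.isHermitian_mul_conjTranspose_self M

lemma hermMtM {a b : ℕ} (M : Matrix (Fin a) (Fin b) ℝ) : (Mᵀ * M).IsHermitian := by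
  simpa [Matrix.conjTranspose_eq_transpose_of_trivial] using
    Matrix.isHermitian_conjTranspose_mul_self M

/-- The singular values of a matrix `M`, as square roots of the eigenvalues of the
smaller of the Gram matrices `M Mᵀ` and `Mᵀ M`; there are `min a b` of them. -/
noncomputable def singVals {a b : ℕ} (M : Matrix (Fin a) (Fin b) ℝ) :
    Fin (min a b) → ℝ :=
  if a ≤ b then
    fun k => Real.sqrt ((hermMMt M).eigenvalues (Fin.castLE (Nat.min_le_left a b) k))
  else
    fun k => Real.sqrt ((hermMtM M).eigenvalues (Fin.castLE (Nat.min_le_right a b) k))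

/-- Subspace distance D₂. -/
noncomputable def D2 {n p q : ℕ} (X : Matrix (Fin n) (Fin p) ℝ)
    (Y : Matrix (Fin n) (Fin q) ℝ) : ℝ :=
  Real.sqrt (max (p : ℝ) (q : ℝ) - frobSq (Xᵀ * Y))

/-- Principal-angle distance D₁ = ‖arccos σ(XᵀY)‖₂. -/
noncomputable def D1 {n p q : ℕ} (X : Matrix (Fin n) (Fin p) ℝ)
    (Y : Matrix (Fin n) (Fin q) ℝ) : ℝ :=
  Real.sqrt (∑ k, (Real.arccos (singVals (Xᵀ * Y) k)) ^ 2)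

/-! By Pythagoras for the projection `X Xᵀ`, `‖Xᵀ Y‖_F² = q - ‖(1 - X Xᵀ) Y‖_F² ≤ q`, with
equality exactly when `X Xᵀ` fixes `Y`; symmetrically `‖Xᵀ Y‖_F² ≤ p`. Hence `D₂ = 0` forces
`p = q = ‖Xᵀ Y‖_F²` and each projector fixes the other frame, so `X Xᵀ = Y Yᵀ` because both
projectors are symmetric. -/

lemma frobSq_nonneg {a b : ℕ} (A : Matrix (Fin a) (Fin b) ℝ) : 0 ≤ frobSq A := by
  simpa only [frobSq, conjTranspose_eq_transpose_of_trivial] using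
    (posSemidef_conjTranspose_mul_self A).trace_nonneg

lemma frobSq_eq_zero_iff {a b : ℕ} {A : Matrix (Fin a) (Fin b) ℝ} : frobSq A = 0 ↔ A = 0 := by
  simpa only [frobSq, conjTranspose_eq_transpose_of_trivial] using
    trace_conjTranspose_mul_self_eq_zero_iff (A := A)

lemma frobSq_transpose {a b : ℕ} (A : Matrix (Fin a) (Fin b) ℝ) : frobSq Aᵀ = frobSq A := by
  rw [frobSq, frobSq, transpose_transpose, trace_mul_comm]

lemma mul_transpose_eq_of_mul_transpose_mul_eq {n p q : ℕ}
    {X : Matrix (Fin n) (Fin p) ℝ} {Y : Matrix (Fin n) (Fin q) ℝ}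
    (hXY : X * Xᵀ * Y = Y) (hYX : Y * Yᵀ * X = X) : X * Xᵀ = Y * Yᵀ :=
  calc X * Xᵀ = Y * Yᵀ * (X * Xᵀ) := by rw [← Matrix.mul_assoc, hYX]
    _ = (X * Xᵀ * (Y * Yᵀ))ᵀ := by simp only [transpose_mul, transpose_transpose, Matrix.mul_assoc]
    _ = Y * Yᵀ := by rw [← Matrix.mul_assoc, hXY, transpose_mul, transpose_transpose]

namespace hasOrthonormalCols

variable {n p q : ℕ} {X : Matrix (Fin n) (Fin p) ℝ}

lemma frobSq_eq (hX : hasOrthonormalCols X) : frobSq X = p := by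
  rw [frobSq, hX, trace_one, Fintype.card_fin]

lemma frobSq_sub_proj_mul (hX : hasOrthonormalCols X) (Y : Matrix (Fin n) (Fin q) ℝ) :
    frobSq ((1 - X * Xᵀ) * Y) = frobSq Y - frobSq (Xᵀ * Y) := by
  have hXXZ : ∀ Z : Matrix (Fin p) (Fin q) ℝ, Xᵀ * (X * Z) = Z := fun Z => by
    rw [← Matrix.mul_assoc, hX, Matrix.one_mul]
  have hgram : ((1 - X * Xᵀ) * Y)ᵀ * ((1 - X * Xᵀ) * Y) = Yᵀ * Y - (Xᵀ * Y)ᵀ * (Xᵀ * Y) := by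
    simp only [transpose_mul, transpose_sub, transpose_transpose, Matrix.sub_mul,
      Matrix.mul_sub, Matrix.one_mul, Matrix.mul_assoc, hXXZ]
    abel
  rw [frobSq, hgram, trace_sub, frobSq, frobSq]

lemma frobSq_transpose_mul_le (hX : hasOrthonormalCols X) (Y : Matrix (Fin n) (Fin q) ℝ) :
    frobSq (Xᵀ * Y) ≤ frobSq Y := by
  linarith [hX.frobSq_sub_proj_mul Y, frobSq_nonneg ((1 - X * Xᵀ) * Y)]

lemma proj_mul_eq_of_frobSq_eq (hX : hasOrthonormalCols X) {Y : Matrix (Fin n) (Fin q) ℝ}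
    (h : frobSq (Xᵀ * Y) = frobSq Y) : X * Xᵀ * Y = Y := by
  have hres : (1 - X * Xᵀ) * Y = 0 :=
    frobSq_eq_zero_iff.mp (by rw [hX.frobSq_sub_proj_mul, h, sub_self])
  rwa [Matrix.sub_mul, Matrix.one_mul, sub_eq_zero, eq_comm] at hres

lemma range_mulVec_eq (hX : hasOrthonormalCols X) :
    Set.range X.mulVec = Set.range (X * Xᵀ).mulVec := by
  ext v
  constructor
  · rintro ⟨u, rfl⟩
    exact ⟨X *ᵥ u, by rw [mulVec_mulVec, Matrix.mul_assoc, hX, Matrix.mul_one]⟩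
  · rintro ⟨u, rfl⟩
    exact ⟨Xᵀ *ᵥ u, by rw [mulVec_mulVec]⟩

end hasOrthonormalCols

/-- if D₂(X,Y) = 0 then p = q, the projectors coincide, and the column
spaces coincide. -/
theorem D2_eq_zero_imp {n p q : ℕ}
    (X : Matrix (Fin n) (Fin p) ℝ) (Y : Matrix (Fin n) (Fin q) ℝ)
    (hX : hasOrthonormalCols X) (hY : hasOrthonormalCols Y)
    (h : D2 X Y = 0) :
    p = q ∧ X * Xᵀ = Y * Yᵀ
      ∧ Set.range X.mulVec = Set.range Y.mulVec := by
  have hD : max (p : ℝ) q ≤ frobSq (Xᵀ * Y) := by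
    unfold D2 at h
    linarith [Real.sqrt_eq_zero'.mp h]
  have hYX : frobSq (Yᵀ * X) = frobSq (Xᵀ * Y) := by
    rw [← frobSq_transpose, transpose_mul, transpose_transpose]
  have hp : (p : ℝ) = frobSq (Xᵀ * Y) := by
    refine le_antisymm ((le_max_left _ _).trans hD) ?_
    simpa only [hYX, hX.frobSq_eq] using hY.frobSq_transpose_mul_le X
  have hq : (q : ℝ) = frobSq (Xᵀ * Y) := by
    refine le_antisymm ((le_max_right _ _).trans hD) ?_
    simpa only [hY.frobSq_eq] using hX.frobSq_transpose_mul_le Y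
  have hproj : X * Xᵀ = Y * Yᵀ := mul_transpose_eq_of_mul_transpose_mul_eq
    (hX.proj_mul_eq_of_frobSq_eq (by rw [hY.frobSq_eq, hq]))
    (hY.proj_mul_eq_of_frobSq_eq (by rw [hX.frobSq_eq, hYX, hp]))
  refine ⟨by exact_mod_cast hp.trans hq.symm, hproj, ?_⟩
  rw [hX.range_mulVec_eq, hY.range_mulVec_eq, hproj]
end

section
/- Let X ∈ ℝ^{n×p}, Y ∈ ℝ^{n×q}, Z ∈ ℝ^{n×r} each have orthonormal columns, and define D₂(A,B) = sqrt(max(dim(A),dim(B)) − ‖AᵀB‖_F²) for such matrices. Then D₂(X,Y) ≤ D₂(X,Z) + D₂(Z,Y) (triangle inequality). -/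
open Matrix

/-!
With `P_X = X Xᵀ`, expanding `‖P_X - P_Y‖_F²` and using `max p q = (p + q + |p - q|) / 2` gives
`2 D2(X, Y)² = |p - q| + ‖P_X - P_Y‖_F²`. Both `|p - q|` and `‖P_X - P_Y‖_F` satisfy the
triangle inequality, and `(a, t) ↦ √(a + t²)` is monotone and subadditive on nonnegative pairs
(Minkowski in the plane after `a = s²`), so `√2 D2` does too.
-/

open scoped Matrix.Norms.Frobenius

lemma frobSq_eq_norm_sq {a b : ℕ} (A : Matrix (Fin a) (Fin b) ℝ) : frobSq A = ‖A‖ ^ 2 := by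
  rw [frobenius_norm_def, ← Real.rpow_natCast _ 2, ← Real.rpow_mul (by positivity)]
  simp [frobSq, trace, mul_apply, sq, Finset.sum_comm (γ := Fin a)]

lemma frobSq_transpose_mul {n p q : ℕ} (X : Matrix (Fin n) (Fin p) ℝ)
    (Y : Matrix (Fin n) (Fin q) ℝ) : frobSq (Xᵀ * Y) = (X * Xᵀ * (Y * Yᵀ)).trace := by
  rw [frobSq, transpose_mul, transpose_transpose, Matrix.mul_assoc, trace_mul_comm]
  simp only [Matrix.mul_assoc]

section

variable {n p q : ℕ} {X : Matrix (Fin n) (Fin p) ℝ} {Y : Matrix (Fin n) (Fin q) ℝ}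

lemma hasOrthonormalCols.trace_mul_transpose (hX : hasOrthonormalCols X) :
    (X * Xᵀ).trace = p := by
  rw [trace_mul_comm, hX, trace_one, Fintype.card_fin]

lemma hasOrthonormalCols.isIdempotentElem_mul_transpose (hX : hasOrthonormalCols X) :
    IsIdempotentElem (X * Xᵀ) := by
  rw [IsIdempotentElem, Matrix.mul_assoc, ← Matrix.mul_assoc Xᵀ, hX, Matrix.one_mul]

lemma hasOrthonormalCols.norm_mul_transpose_sub_sq (hX : hasOrthonormalCols X)
    (hY : hasOrthonormalCols Y) :
    ‖X * Xᵀ - Y * Yᵀ‖ ^ 2 = p + q - 2 * frobSq (Xᵀ * Y) := by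
  have hsymm : (X * Xᵀ - Y * Yᵀ)ᵀ = X * Xᵀ - Y * Yᵀ := by
    simp only [transpose_sub, transpose_mul, transpose_transpose]
  rw [← frobSq_eq_norm_sq, frobSq, hsymm, sub_mul, mul_sub, mul_sub,
    hX.isIdempotentElem_mul_transpose.eq, hY.isIdempotentElem_mul_transpose.eq,
    trace_sub, trace_sub, trace_sub, trace_mul_comm (Y * Yᵀ), hX.trace_mul_transpose,
    hY.trace_mul_transpose, frobSq_transpose_mul]
  ring

lemma hasOrthonormalCols.D2_eq (hX : hasOrthonormalCols X) (hY : hasOrthonormalCols Y) :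
    D2 X Y = √(|(p : ℝ) - q| + ‖X * Xᵀ - Y * Yᵀ‖ ^ 2) / √2 := by
  rw [D2, ← Real.sqrt_div' _ zero_le_two, hX.norm_mul_transpose_sub_sq hY, max_def]
  congr 1
  split_ifs with hpq
  · rw [abs_of_nonpos (sub_nonpos.2 hpq)]; ring
  · rw [abs_of_pos (sub_pos.2 (not_le.1 hpq))]; ring

end

lemma sqrt_add_sq_le_of_le_add {a a₁ a₂ t t₁ t₂ : ℝ} (ha₁ : 0 ≤ a₁) (ha₂ : 0 ≤ a₂)
    (ht : 0 ≤ t) (ht₁ : 0 ≤ t₁) (ht₂ : 0 ≤ t₂) (ha : a ≤ a₁ + a₂) (htt : t ≤ t₁ + t₂) :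
    √(a + t ^ 2) ≤ √(a₁ + t₁ ^ 2) + √(a₂ + t₂ ^ 2) := by
  have hs₁ : t₁ ≤ √(a₁ + t₁ ^ 2) := Real.le_sqrt_of_sq_le (by linarith)
  have hs₂ : t₂ ≤ √(a₂ + t₂ ^ 2) := Real.le_sqrt_of_sq_le (by linarith)
  rw [Real.sqrt_le_iff]
  refine ⟨by positivity, ?_⟩
  rw [add_sq, Real.sq_sqrt (by positivity), Real.sq_sqrt (by positivity)]
  nlinarith [mul_le_mul hs₁ hs₂ ht₂ (ht₁.trans hs₁)]

/-- triangle inequality for D₂. -/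
theorem D2_triangle {n p q r : ℕ}
    (X : Matrix (Fin n) (Fin p) ℝ) (Y : Matrix (Fin n) (Fin q) ℝ)
    (Z : Matrix (Fin n) (Fin r) ℝ)
    (hX : hasOrthonormalCols X) (hY : hasOrthonormalCols Y)
    (hZ : hasOrthonormalCols Z) :
    D2 X Y ≤ D2 X Z + D2 Z Y := by
  rw [hX.D2_eq hY, hX.D2_eq hZ, hZ.D2_eq hY, ← add_div]
  gcongr
  exact sqrt_add_sq_le_of_le_add (abs_nonneg _) (abs_nonneg _) (norm_nonneg _) (norm_nonneg _)
    (norm_nonneg _) (abs_sub_le _ _ _) (norm_sub_le_norm_sub_add_norm_sub _ _ _)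
end
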